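/- arXiv:2012.14858 — 6 statements merged into one kernel-verified Lean document; each statement's English description precedes it below -/
import Mathlib

section
/- Let E be a compact convex subset of a finite-dimensional real inner product space V and let F ⊆ E be an exposed face of E, i.e. F = F_u(E) for some u ∈ V, where F_u(E) = {x ∈ E : ⟨x, u⟩ = max_{y ∈ E} ⟨y, u⟩}. Then the set C_F := {u ∈ V : F = F_u(E)} is a convex cone. Moreover, if K is a compact subgroup of the orthogonal group of V such that k(E) = E and k(F) = F for every k ∈ K, then C_F contains a vector fixed by every element of K. -/
/-!
Positive multiples of `u ∈ C_F` stay in `C_F`, and so do sums `u + v` of elements of `C_F`,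
because a point of `F` (which exists by compactness unless `E` is empty) maximises both
`⟪·, u⟫` and `⟪·, v⟫`. An orthogonal `k` preserving `E` and `F` maps `F_u(E)` to `F_{ku}(E)`,
so `C_F` is `K`-invariant. The convex hull of the orbit `K u₀` is therefore a compact convex
`K`-invariant subset of `C_F`; its point of minimal norm is unique by strict convexity of the
norm, hence fixed by `K`.
-/

/-- The exposed face of `E` defined by `u`: the set of points of `E` where the linear
functional `x ↦ ⟪x, u⟫` attains its maximum over `E`. -/
def exposedFace {V : Type*} [NormedAddCommGroup V] [InnerProductSpace ℝ V]
    (E : Set V) (u : V) : Set V :=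
  {x ∈ E | ∀ y ∈ E, (inner ℝ y u : ℝ) ≤ inner ℝ x u}

open Set Function
open scoped RealInnerProductSpace

section ExposedFace

variable {V W : Type*} [NormedAddCommGroup V] [InnerProductSpace ℝ V]
  [NormedAddCommGroup W] [InnerProductSpace ℝ W] {E : Set V} {u v : V}

@[simp]
lemma exposedFace_empty (u : V) : exposedFace ∅ u = ∅ := by
  simp [exposedFace]

lemma IsCompact.exposedFace_nonempty (hE : IsCompact E) (hne : E.Nonempty) (u : V) :
    (exposedFace E u).Nonempty := by
  have hcont : Continuous fun x : V => ⟪x, u⟫ := continuous_id.inner continuous_const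
  obtain ⟨x, hxE, hmax⟩ := hE.exists_isMaxOn hne hcont.continuousOn
  exact ⟨x, hxE, fun y hy => hmax hy⟩

lemma exposedFace_smul_of_pos {c : ℝ} (hc : 0 < c) :
    exposedFace E (c • u) = exposedFace E u := by
  ext x
  simp only [exposedFace, mem_ofPred_eq, real_inner_smul_right, mul_le_mul_iff_of_pos_left hc]

lemma exposedFace_add_of_eq (hE : IsCompact E) (h : exposedFace E u = exposedFace E v) :
    exposedFace E (u + v) = exposedFace E u := by
  rcases E.eq_empty_or_nonempty with rfl | hne
  · simp
  obtain ⟨z, hzu⟩ := hE.exposedFace_nonempty hne u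
  have hzv : z ∈ exposedFace E v := h ▸ hzu
  ext x
  constructor
  · rintro ⟨hxE, hx⟩
    refine ⟨hxE, fun y hy => ?_⟩
    have hzx := hx z hzu.1
    rw [inner_add_right, inner_add_right] at hzx
    linarith [hzu.2 y hy, hzv.2 x hxE]
  · intro hxu
    have hxv : x ∈ exposedFace E v := h ▸ hxu
    refine ⟨hxu.1, fun y hy => ?_⟩
    rw [inner_add_right, inner_add_right]
    linarith [hxu.2 y hy, hxv.2 y hy]

lemma convex_setOf_exposedFace_eq (hE : IsCompact E) (F : Set V) :
    Convex ℝ {u | F = exposedFace E u} := by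
  refine convex_iff_forall_pos.2 fun u hu v hv a b ha hb _ => ?_
  have hsmul : ∀ {w : V} {c : ℝ}, 0 < c → F = exposedFace E w → F = exposedFace E (c • w) :=
    fun hc hw => hw.trans (exposedFace_smul_of_pos hc).symm
  exact (hsmul ha hu).trans
    (exposedFace_add_of_eq hE ((hsmul ha hu).symm.trans (hsmul hb hv))).symm

lemma LinearIsometry.image_exposedFace (k : V →ₗᵢ[ℝ] W) (E : Set V) (u : V) :
    k '' exposedFace E u = exposedFace (k '' E) (k u) := by
  ext x
  constructor
  · rintro ⟨x, ⟨hxE, hx⟩, rfl⟩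
    refine ⟨mem_image_of_mem k hxE, forall_mem_image.2 fun y hy => ?_⟩
    simpa only [LinearIsometry.inner_map_map] using hx y hy
  · rintro ⟨⟨x, hxE, rfl⟩, hx⟩
    refine ⟨x, ⟨hxE, fun y hy => ?_⟩, rfl⟩
    simpa only [LinearIsometry.inner_map_map] using hx (k y) (mem_image_of_mem k hy)

end ExposedFace

section ConvexHull

variable {V : Type*} [NormedAddCommGroup V] [NormedSpace ℝ V] [FiniteDimensional ℝ V]

lemma convexHull_eq_iUnion_image_stdSimplex (s : Set V) :
    convexHull ℝ s = ⋃ m ∈ Finset.range (Module.finrank ℝ V + 2),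
      (fun p : (Fin m → ℝ) × (Fin m → V) => ∑ i, p.1 i • p.2 i) ''
        (stdSimplex ℝ (Fin m) ×ˢ univ.pi fun _ => s) := by
  apply Subset.antisymm
  · intro x hx
    -- Carathéodory: at most `finrank + 1` affinely independent points are needed.
    obtain ⟨ι, _, z, w, hzs, hz, hw0, hw1, rfl⟩ := eq_pos_convex_span_of_mem_convexHull hx
    have hcard : Fintype.card ι < Module.finrank ℝ V + 2 :=
      Nat.lt_succ_of_le (hz.card_le_finrank_succ.trans (Nat.succ_le_succ (Submodule.finrank_le _)))
    let e := Fintype.equivFin ι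
    refine mem_biUnion (Finset.mem_range.2 hcard)
      ⟨(w ∘ e.symm, z ∘ e.symm), ⟨⟨fun i => (hw0 _).le, ?_⟩, fun i _ => hzs (mem_range_self _)⟩, ?_⟩
    · simpa only [comp_apply, e.symm.sum_comp] using hw1
    · exact e.symm.sum_comp fun j => w j • z j
  · refine iUnion₂_subset fun m _ => ?_
    rintro _ ⟨⟨w, z⟩, ⟨hw, hz⟩, rfl⟩
    exact (convex_convexHull ℝ s).sum_mem (fun i _ => hw.1 i) hw.2
      fun i _ => subset_convexHull ℝ s (hz i (mem_univ i))

lemma isCompact_convexHull {s : Set V} (hs : IsCompact s) : IsCompact (convexHull ℝ s) := by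
  rw [convexHull_eq_iUnion_image_stdSimplex]
  refine Finset.isCompact_biUnion _ fun m _ => ?_
  exact ((isCompact_stdSimplex ℝ (Fin m)).prod (isCompact_univ_pi fun _ => hs)).image (by fun_prop)

variable [StrictConvexSpace ℝ V]

lemma IsCompact.exists_mem_convexHull_isFixedPt {s : Set V} (hs : IsCompact s) (hne : s.Nonempty) :
    ∃ v ∈ convexHull ℝ s, ∀ k : V →ₗᵢ[ℝ] V, MapsTo k s s → IsFixedPt k v := by
  obtain ⟨v, hv, hmin⟩ := (isCompact_convexHull hs).exists_isMinOn
    (hne.mono (subset_convexHull ℝ s)) continuous_norm.continuousOn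
  refine ⟨v, hv, fun k hk => ?_⟩
  have hkv : k v ∈ convexHull ℝ s :=
    convexHull_mono hk.image_subset (k.toLinearMap.image_convexHull s ▸ mem_image_of_mem k hv)
  have hmid : (1 / 2 : ℝ) • (v + k v) ∈ convexHull ℝ s := by
    rw [smul_add]
    exact convex_convexHull ℝ s hv hkv (by norm_num) (by norm_num) (by norm_num)
  by_contra hneq
  exact (hmin hmid).not_gt ((norm_midpoint_lt_iff (k.norm_map v).symm).2 (Ne.symm hneq))

end ConvexHull

theorem stmt_3_general {V : Type*} [NormedAddCommGroup V] [InnerProductSpace ℝ V]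
    [FiniteDimensional ℝ V] (E F : Set V) (hEcomp : IsCompact E)
    (u₀ : V) (hF : F = exposedFace E u₀)
    (K : Set (V →L[ℝ] V)) (hK1 : (1 : V →L[ℝ] V) ∈ K)
    (hKmul : ∀ k ∈ K, ∀ l ∈ K, k * l ∈ K)
    (hKorth : ∀ k ∈ K, ContinuousLinearMap.adjoint k * k = 1)
    (hKcomp : IsCompact K)
    (hKE : ∀ k ∈ K, k '' E = E) (hKF : ∀ k ∈ K, k '' F = F) :
    Convex ℝ {u : V | F = exposedFace E u} ∧
    (∀ u ∈ {u : V | F = exposedFace E u}, ∀ c : ℝ, 0 < c →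
      c • u ∈ {u : V | F = exposedFace E u}) ∧
    ∃ u ∈ {u : V | F = exposedFace E u}, ∀ k ∈ K, k u = u := by
  let toLinearIsometry (k : V →L[ℝ] V) (hk : k ∈ K) : V →ₗᵢ[ℝ] V :=
    ⟨k, k.norm_map_iff_adjoint_comp_self.2 (hKorth k hk)⟩
  have hKC : ∀ k ∈ K, ∀ u, F = exposedFace E u → F = exposedFace E (k u) := fun k hk u hu =>
    calc F = k '' exposedFace E u := by rw [← hu, hKF k hk]
      _ = exposedFace (k '' E) (k u) := (toLinearIsometry k hk).image_exposedFace E u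
      _ = exposedFace E (k u) := by rw [hKE k hk]
  have hconv := convex_setOf_exposedFace_eq hEcomp F
  have horbit : MapsTo (fun k : V →L[ℝ] V => k u₀) K {u | F = exposedFace E u} :=
    fun k hk => hKC k hk u₀ hF
  obtain ⟨v, hv, hfix⟩ := (hKcomp.image (continuous_eval_const u₀)).exists_mem_convexHull_isFixedPt
    ⟨u₀, 1, hK1, rfl⟩
  refine ⟨hconv, fun u hu c hc => hu.trans (exposedFace_smul_of_pos hc).symm, v,
    convexHull_min horbit.image_subset hconv hv,
    fun k hk => hfix (toLinearIsometry k hk) ?_⟩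
  rintro _ ⟨l, hl, rfl⟩
  exact ⟨k * l, hKmul k hk l hl, rfl⟩

/-- Let `E` be a compact convex subset of a finite-dimensional real inner
product space `V` and `F = F_{u₀}(E)` an exposed face of `E`.  Then
`C_F = {u : V | F = F_u(E)}` is a convex cone.  Moreover, if `K` is a compact subgroup of the
orthogonal group of `V` preserving both `E` and `F`, then `C_F` contains a vector fixed by
every element of `K`. -/
theorem stmt_3 {V : Type*} [NormedAddCommGroup V] [InnerProductSpace ℝ V]
    [FiniteDimensional ℝ V] (E F : Set V) (hEconv : Convex ℝ E) (hEcomp : IsCompact E)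
    (u₀ : V) (hF : F = exposedFace E u₀)
    (K : Set (V →L[ℝ] V)) (hK1 : (1 : V →L[ℝ] V) ∈ K)
    (hKmul : ∀ k ∈ K, ∀ l ∈ K, k * l ∈ K)
    (hKinv : ∀ k ∈ K, ContinuousLinearMap.adjoint k ∈ K)
    (hKorth : ∀ k ∈ K, ContinuousLinearMap.adjoint k * k = 1)
    (hKcomp : IsCompact K)
    (hKE : ∀ k ∈ K, k '' E = E) (hKF : ∀ k ∈ K, k '' F = F) :
    Convex ℝ {u : V | F = exposedFace E u} ∧
    (∀ u ∈ {u : V | F = exposedFace E u}, ∀ c : ℝ, 0 < c →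
      c • u ∈ {u : V | F = exposedFace E u}) ∧
    ∃ u ∈ {u : V | F = exposedFace E u}, ∀ k ∈ K, k u = u :=
  stmt_3_general E F hEcomp u₀ hF K hK1 hKmul hKorth hKcomp hKE hKF
end

section
/- Let V be a finite-dimensional complex inner product space, β a self-adjoint endomorphism of V with largest eigenvalue λ₁ and eigenspace W = ker(β − λ₁). Let M ⊆ ℙ(V) be a closed subset which is full (i.e., the nonzero vectors representing points of M span V) and invariant under the flow [v] ↦ [exp(tβ)v] for all t ∈ ℝ. Then M ∩ ℙ(W) ≠ ∅, i.e., there exists a nonzero w ∈ W with [w] ∈ M. -/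
/-! Rescaling the flow by `e^{-tλ₁}` makes `e^{-tλ₁} exp(tβ) v` converge, as `t → ∞`, to the
orthogonal projection of `v` onto `W`: in an orthonormal eigenbasis of `β` each component is
multiplied by `e^{t(μ - λ₁)}`, which is `1` on `W` and decays for the smaller eigenvalues `μ`.
Since `M` is full and `W ≠ 0`, some `[v] ∈ M` has nonzero projection onto `W`; the rescaled flow
stays in `M` projectively, so by closedness the limit point lies in `M ∩ ℙ(W)`. -/

open scoped LinearAlgebra.Projectivization

noncomputable instance stmt9.instTop (V : Type*) [NormedAddCommGroup V]
    [InnerProductSpace ℂ V] : TopologicalSpace (ℙ ℂ V) :=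
  instTopologicalSpaceQuotient

lemma stmt9.exp_apply_ne_zero {V : Type*} [NormedAddCommGroup V] [InnerProductSpace ℂ V]
    [FiniteDimensional ℂ V] (A : V →L[ℂ] V) (v : V) (hv : v ≠ 0) :
    NormedSpace.exp A v ≠ 0 := by
  intro h
  have h1 : NormedSpace.exp (-A) * NormedSpace.exp A = 1 := by
    rw [← NormedSpace.exp_add_of_commute_of_mem_ball (𝕂 := ℂ) (Commute.neg_left (Commute.refl A))
      ((NormedSpace.expSeries_radius_eq_top ℂ (V →L[ℂ] V)).symm ▸ edist_lt_top _ _)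
      ((NormedSpace.expSeries_radius_eq_top ℂ (V →L[ℂ] V)).symm ▸ edist_lt_top _ _),
      neg_add_cancel, NormedSpace.exp_zero]
  have h2 : NormedSpace.exp (-A) (NormedSpace.exp A v) = v := by
    have := congrArg (fun f : V →L[ℂ] V => f v) h1
    simpa using this
  rw [h] at h2
  simp at h2
  exact hv h2.symm

open Filter Topology
open scoped InnerProductSpace

theorem ContinuousLinearMap.exp_apply_of_apply_eq_smul {E : Type*} [NormedAddCommGroup E]
    [NormedSpace ℂ E] [CompleteSpace E] {A : E →L[ℂ] E} {x : E} {c : ℂ} (h : A x = c • x) :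
    NormedSpace.exp A x = Complex.exp c • x := by
  have hpow : ∀ m : ℕ, (A ^ m) x = c ^ m • x := by
    intro m
    induction m with
    | zero => simp
    | succ k ih =>
      rw [pow_succ, mul_apply_eq_comp, h, map_smul, ih, smul_smul, pow_succ, mul_comm]
  calc NormedSpace.exp A x
      = (∑' m : ℕ, ((m.factorial : ℝ))⁻¹ • A ^ m) x := by rw [NormedSpace.exp_eq_tsum ℝ]
    _ = ∑' m : ℕ, (((m.factorial : ℝ))⁻¹ • A ^ m) x :=
        (ContinuousLinearMap.apply ℂ E x).map_tsum (NormedSpace.expSeries_summable' A)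
    _ = ∑' m : ℕ, (((m.factorial : ℝ))⁻¹ • c ^ m) • x := by
        refine tsum_congr fun m => ?_
        rw [smul_apply, hpow, smul_assoc]
    _ = (∑' m : ℕ, ((m.factorial : ℝ))⁻¹ • c ^ m) • x :=
        (NormedSpace.expSeries_summable' c).tsum_smul_const x
    _ = NormedSpace.exp c • x := by rw [NormedSpace.exp_eq_tsum ℝ]
    _ = Complex.exp c • x := by rw [Complex.exp_eq_exp_ℂ]

theorem ContinuousLinearMap.exp_real_smul_apply_of_apply_eq_smul {E : Type*}
    [NormedAddCommGroup E] [NormedSpace ℂ E] [CompleteSpace E] {A : E →L[ℂ] E} {x : E} {μ : ℝ}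
    (h : A x = (μ : ℂ) • x) (t : ℝ) :
    NormedSpace.exp (t • A) x = Real.exp (t * μ) • x := by
  have htA : (t • A) x = ((t * μ : ℝ) : ℂ) • x := by
    rw [smul_apply, h, ← Complex.coe_smul, smul_smul, Complex.ofReal_mul]
  rw [exp_apply_of_apply_eq_smul htA, ← Complex.ofReal_exp, Complex.coe_smul]

theorem Submodule.exists_mem_starProjection_ne_zero {𝕜 E : Type*} [RCLike 𝕜]
    [NormedAddCommGroup E] [InnerProductSpace 𝕜 E] {S : Set E} (hS : span 𝕜 S = ⊤)
    {K : Submodule 𝕜 E} [K.HasOrthogonalProjection] (hK : K ≠ ⊥) :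
    ∃ v ∈ S, K.starProjection v ≠ 0 := by
  by_contra! h
  have hSK : span 𝕜 S ≤ Kᗮ :=
    span_le.mpr fun v hv => (starProjection_apply_eq_zero_iff K).mp (h v hv)
  rw [hS, top_le_iff, orthogonal_eq_top_iff] at hSK
  exact hK hSK

theorem Projectivization.mk_mem_of_tendsto {V : Type*} [NormedAddCommGroup V]
    [InnerProductSpace ℂ V] {M : Set (ℙ ℂ V)} (hM : IsClosed M) {ι : Type*} {l : Filter ι}
    [l.NeBot] {f : ι → V} {w : V} (hf : ∀ i, f i ≠ 0) (hw : w ≠ 0)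
    (hfM : ∀ i, mk ℂ (f i) (hf i) ∈ M) (hlim : Tendsto f l (𝓝 w)) : mk ℂ w hw ∈ M := by
  have hlim' : Tendsto (fun i => (⟨f i, hf i⟩ : {u : V // u ≠ 0})) l (𝓝 ⟨w, hw⟩) :=
    tendsto_subtype_rng.mpr hlim
  exact hM.mem_of_tendsto ((continuous_quotient_mk'.tendsto _).comp hlim')
    (Eventually.of_forall hfM)

section Flow

variable {V : Type*} [NormedAddCommGroup V] [InnerProductSpace ℂ V] [FiniteDimensional ℂ V]
  {β : V →L[ℂ] V} {lam : ℝ}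

theorem tendsto_exp_smul_exp_apply_of_mem_orthogonal_eigenspace (hβ : IsSelfAdjoint β)
    (hle : ∀ μ : ℝ, Module.End.HasEigenvalue (β : Module.End ℂ V) μ → μ ≤ lam) {u : V}
    (hu : u ∈ (Module.End.eigenspace (β : Module.End ℂ V) lam)ᗮ) :
    Tendsto (fun t : ℝ => Real.exp (-(t * lam)) • NormedSpace.exp (t • β) u) atTop (𝓝 0) := by
  have hsym : (β : V →ₗ[ℂ] V).IsSymmetric := hβ.isSymmetric
  have hn : Module.finrank ℂ V = Module.finrank ℂ V := rfl
  set b := hsym.eigenvectorBasis hn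
  set μ := hsym.eigenvalues hn
  have hb : ∀ i, β (b i) = (μ i : ℂ) • b i := hsym.apply_eigenvectorBasis hn
  have hflow : ∀ t : ℝ, Real.exp (-(t * lam)) • NormedSpace.exp (t • β) u =
      ∑ i, Real.exp (t * (μ i - lam)) • (⟪b i, u⟫_ℂ • b i) := by
    intro t
    conv_lhs => rw [← b.sum_repr' u]
    rw [map_sum, Finset.smul_sum]
    refine Finset.sum_congr rfl fun i _ => ?_
    rw [map_smul, ContinuousLinearMap.exp_real_smul_apply_of_apply_eq_smul (hb i),
      smul_comm _ ⟪b i, u⟫_ℂ, smul_smul, ← Real.exp_add, smul_comm]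
    ring_nf
  simp only [hflow]
  suffices hterm : ∀ i, Tendsto (fun t : ℝ => Real.exp (t * (μ i - lam)) • (⟪b i, u⟫_ℂ • b i))
      atTop (𝓝 0) by
    simpa using tendsto_finsetSum Finset.univ fun i _ => hterm i
  intro i
  rcases (hle (μ i) (hsym.hasEigenvalue_eigenvalues hn i)).lt_or_eq with hlt | heq
  · have hdecay : Tendsto (fun t : ℝ => Real.exp (t * (μ i - lam))) atTop (𝓝 0) :=
      Real.tendsto_exp_atBot.comp (tendsto_id.atTop_mul_const_of_neg (sub_neg.mpr hlt))
    simpa using hdecay.smul_const (⟪b i, u⟫_ℂ • b i)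
  · have hbi : b i ∈ Module.End.eigenspace (β : Module.End ℂ V) lam := by
      rw [Module.End.mem_eigenspace_iff, ← heq]
      exact hb i
    simp [Submodule.inner_right_of_mem_orthogonal hbi hu]

theorem tendsto_exp_smul_exp_apply_starProjection_eigenspace (hβ : IsSelfAdjoint β)
    (hle : ∀ μ : ℝ, Module.End.HasEigenvalue (β : Module.End ℂ V) μ → μ ≤ lam) (v : V) :
    Tendsto (fun t : ℝ => Real.exp (-(t * lam)) • NormedSpace.exp (t • β) v) atTop
      (𝓝 ((Module.End.eigenspace (β : Module.End ℂ V) lam).starProjection v)) := by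
  set W := Module.End.eigenspace (β : Module.End ℂ V) lam
  have hW : β (W.starProjection v) = (lam : ℂ) • W.starProjection v :=
    Module.End.mem_eigenspace_iff.mp (W.starProjection_apply_mem v)
  have hsplit : ∀ t : ℝ, Real.exp (-(t * lam)) • NormedSpace.exp (t • β) v =
      W.starProjection v +
        Real.exp (-(t * lam)) • NormedSpace.exp (t • β) (v - W.starProjection v) := by
    intro t
    rw [map_sub, ContinuousLinearMap.exp_real_smul_apply_of_apply_eq_smul hW, smul_sub,
      smul_smul, ← Real.exp_add, neg_add_cancel, Real.exp_zero, one_smul, add_sub_cancel]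
  simp only [hsplit]
  simpa using tendsto_const_nhds.add (tendsto_exp_smul_exp_apply_of_mem_orthogonal_eigenspace
    hβ hle (W.sub_starProjection_mem_orthogonal v))

end Flow

/-- Let `β` be a self-adjoint endomorphism of a finite-dimensional complex
inner product space `V` with largest eigenvalue `λ₁` and eigenspace `W = ker (β - λ₁)`.
Let `M ⊆ ℙ(V)` be a closed subset which is full (its representatives span `V`) and invariant
under the flow `[v] ↦ [exp(tβ)v]`.  Then `M ∩ ℙ(W) ≠ ∅`, i.e. there is a nonzero `w ∈ W` with
`[w] ∈ M`. -/
theorem stmt_9 {V : Type*} [NormedAddCommGroup V] [InnerProductSpace ℂ V]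
    [FiniteDimensional ℂ V] (β : V →L[ℂ] V) (hβ : IsSelfAdjoint β) (lam₁ : ℝ)
    (hlam : IsGreatest {μ : ℝ |
      Module.End.HasEigenvalue ((β : V →ₗ[ℂ] V) : Module.End ℂ V) (μ : ℂ)} lam₁)
    (M : Set (ℙ ℂ V)) (hMcl : IsClosed M)
    (hfull : Submodule.span ℂ {v : V | ∃ hv : v ≠ 0, Projectivization.mk ℂ v hv ∈ M} = ⊤)
    (hinv : ∀ (v : V) (hv : v ≠ 0), Projectivization.mk ℂ v hv ∈ M → ∀ t : ℝ,
      Projectivization.mk ℂ (NormedSpace.exp (t • β) v)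
        (stmt9.exp_apply_ne_zero (t • β) v hv) ∈ M) :
    ∃ (w : V) (hw : w ≠ 0), β w = (lam₁ : ℂ) • w ∧ Projectivization.mk ℂ w hw ∈ M := by
  set W := Module.End.eigenspace (β : Module.End ℂ V) lam₁
  obtain ⟨v, ⟨hv, hvM⟩, hPv⟩ := Submodule.exists_mem_starProjection_ne_zero hfull hlam.1
  refine ⟨W.starProjection v, hPv,
    Module.End.mem_eigenspace_iff.mp (W.starProjection_apply_mem v), ?_⟩
  have hflow_ne : ∀ t : ℝ, Real.exp (-(t * lam₁)) • NormedSpace.exp (t • β) v ≠ 0 := fun t =>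
    smul_ne_zero (Real.exp_pos _).ne' (stmt9.exp_apply_ne_zero (t • β) v hv)
  refine Projectivization.mk_mem_of_tendsto hMcl hflow_ne hPv (fun t => ?_)
    (tendsto_exp_smul_exp_apply_starProjection_eigenspace hβ (fun μ hμ => hlam.2 hμ) v)
  convert hinv v hv hvM t using 1
  rw [Projectivization.mk_eq_mk_iff']
  exact ⟨Real.exp (-(t * lam₁)), Complex.coe_smul _ _⟩
end

section
/- Let V be a finite-dimensional complex inner product space and β a self-adjoint endomorphism of V with distinct eigenvalues λ₁ > λ₂ > ⋯ > λ_k, eigenspaces V₁, …, V_k and orthogonal projections P_i onto V_i. For g ∈ End(V), the limit lim_{t → −∞} exp(tβ) g exp(−tβ) exists in End(V) if and only if P_i g P_j = 0 for all pairs i, j with λ_i < λ_j; and in that case the limit equals the block-diagonal part Σ_{i=1}^k P_i g P_i. -/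
/-!
Write `g = ∑ i j, P i * g * P j`. Since `β * P i = λ_i • P i = P i * β`, conjugation by
`exp (t • β)` multiplies the block `P i * g * P j` by `exp (t * (λ_i - λ_j))`. As `t → -∞` this
factor tends to `0` when `λ_i > λ_j`, equals `1` on the diagonal and blows up when `λ_i < λ_j`,
so the limit exists exactly when the latter blocks vanish, and is then the diagonal part.
Only the algebra of a complete family of orthogonal idempotents diagonalising `β` enters, so
the argument runs in any real Banach algebra.
-/

open NormedSpace Filter Topology Module.End

section Idempotents

variable {ι R 𝕜 : Type*} [Fintype ι] [CommSemiring 𝕜] [Semiring R] [Algebra 𝕜 R]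
  {e : ι → R}

theorem CompleteOrthogonalIdempotents.sum_mul_mul (he : CompleteOrthogonalIdempotents e)
    (x : R) : ∑ i, ∑ j, e i * x * e j = x := by
  simp only [← Finset.mul_sum, ← Finset.sum_mul, he.complete, one_mul, mul_one]

theorem CompleteOrthogonalIdempotents.mul_eq_smul_of_mul_eq_smul
    (he : CompleteOrthogonalIdempotents e) {a : R} {c : ι → 𝕜}
    (ha : ∀ i, a * e i = c i • e i) (i : ι) : e i * a = c i • e i := by
  classical
  calc e i * a = ∑ j, c j • (e i * e j) := by
        simp only [← mul_smul_comm, ← ha, ← mul_assoc, ← Finset.mul_sum, he.complete, mul_one]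
    _ = c i • e i := by
        rw [Finset.sum_eq_single i (fun j _ hji => by rw [he.ortho hji.symm, smul_zero])
          (by simp), (he.idem i).eq]

end Idempotents

section Limits

variable {E : Type*} [AddCommGroup E] [TopologicalSpace E] [Module ℝ E] [ContinuousSMul ℝ E]

theorem tendsto_exp_mul_smul_atBot_zero {r : ℝ} (hr : 0 < r) (x : E) :
    Tendsto (fun t : ℝ => Real.exp (t * r) • x) atBot (𝓝 0) := by
  simpa using (Real.tendsto_exp_atBot.comp (tendsto_id.atBot_mul_const hr)).smul_const x

theorem eq_zero_of_tendsto_exp_mul_smul_atBot [T2Space E] {r : ℝ} (hr : r < 0) {x y : E}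
    (h : Tendsto (fun t : ℝ => Real.exp (t * r) • x) atBot (𝓝 y)) : x = 0 := by
  have hzero := (Real.tendsto_exp_atBot.comp
    (tendsto_id.atBot_mul_const (neg_pos.2 hr))).smul h
  rw [zero_smul] at hzero
  refine tendsto_nhds_unique (tendsto_const_nhds.congr fun t => ?_) hzero
  simp only [Function.comp_apply, id, smul_smul, ← Real.exp_add, mul_neg, neg_add_cancel,
    Real.exp_zero, one_smul]

end Limits

section BanachAlgebra

variable {A : Type*} [NormedRing A] [NormedAlgebra ℝ A] [CompleteSpace A]

theorem exp_mul_eq_smul_of_mul_eq_smul {a p : A} {c : ℝ} (h : a * p = c • p) :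
    exp a * p = Real.exp c • p := by
  let := NormedAlgebra.restrictScalars ℚ ℝ A
  have : SemiconjBy p (algebraMap ℝ A c) a := by
    rw [SemiconjBy, h, ← Algebra.commutes, Algebra.smul_def]
  rw [← this.exp_right.eq, ← algebraMap_exp_comm, ← Algebra.commutes, ← Algebra.smul_def,
    Real.exp_eq_exp_ℝ]

theorem mul_exp_eq_smul_of_mul_eq_smul {a p : A} {c : ℝ} (h : p * a = c • p) :
    p * exp a = Real.exp c • p := by
  let := NormedAlgebra.restrictScalars ℚ ℝ A
  have : SemiconjBy p a (algebraMap ℝ A c) := by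
    rw [SemiconjBy, h, Algebra.smul_def]
  rw [this.exp_right.eq, ← algebraMap_exp_comm, ← Algebra.smul_def, Real.exp_eq_exp_ℝ]

variable {ι : Type*} [Fintype ι] {e : ι → A} {a : A} {c : ι → ℝ}

theorem CompleteOrthogonalIdempotents.mul_exp_conj_mul (he : CompleteOrthogonalIdempotents e)
    (ha : ∀ i, a * e i = c i • e i) (g : A) (t : ℝ) (i j : ι) :
    e i * (exp (t • a) * g * exp (-(t • a))) * e j =
      Real.exp (t * (c i - c j)) • (e i * g * e j) := by
  have hleft : e i * exp (t • a) = Real.exp (t * c i) • e i :=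
    mul_exp_eq_smul_of_mul_eq_smul <| by
      rw [mul_smul_comm, he.mul_eq_smul_of_mul_eq_smul ha, smul_smul]
  have hright : exp (-(t • a)) * e j = Real.exp (-(t * c j)) • e j :=
    exp_mul_eq_smul_of_mul_eq_smul <| by
      rw [neg_mul, smul_mul_assoc, ha, smul_smul, ← neg_smul]
  calc e i * (exp (t • a) * g * exp (-(t • a))) * e j
      = (e i * exp (t • a)) * g * (exp (-(t • a)) * e j) := by simp only [mul_assoc]
    _ = Real.exp (t * (c i - c j)) • (e i * g * e j) := by
      rw [hleft, hright, smul_mul_assoc, smul_mul_assoc, mul_smul_comm, smul_smul,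
        ← Real.exp_add]
      ring_nf

theorem CompleteOrthogonalIdempotents.tendsto_exp_conj_atBot
    (he : CompleteOrthogonalIdempotents e) (ha : ∀ i, a * e i = c i • e i)
    (hc : Function.Injective c) {g : A} (hg : ∀ i j, c i < c j → e i * g * e j = 0) :
    Tendsto (fun t : ℝ => exp (t • a) * g * exp (-(t • a))) atBot (𝓝 (∑ i, e i * g * e i)) := by
  classical
  have hblock (i j : ι) : Tendsto (fun t : ℝ => Real.exp (t * (c i - c j)) • (e i * g * e j))
      atBot (𝓝 (if i = j then e i * g * e j else 0)) := by
    rcases lt_trichotomy (c i) (c j) with hlt | heq | hgt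
    · simp [hg i j hlt, ne_of_apply_ne c hlt.ne]
    · simp [hc heq]
    · simpa [ne_of_apply_ne c hgt.ne'] using tendsto_exp_mul_smul_atBot_zero (sub_pos.2 hgt) _
  have hsum := tendsto_finsetSum Finset.univ fun i _ =>
    tendsto_finsetSum Finset.univ fun j _ => hblock i j
  simp only [Finset.sum_ite_eq, Finset.mem_univ, if_true] at hsum
  refine hsum.congr fun t => ?_
  rw [← he.sum_mul_mul (exp (t • a) * g * exp (-(t • a)))]
  simp only [he.mul_exp_conj_mul ha]

theorem CompleteOrthogonalIdempotents.mul_mul_eq_zero_of_tendsto_exp_conj_atBot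
    (he : CompleteOrthogonalIdempotents e) (ha : ∀ i, a * e i = c i • e i) {g L : A}
    (hL : Tendsto (fun t : ℝ => exp (t • a) * g * exp (-(t • a))) atBot (𝓝 L))
    {i j : ι} (hij : c i < c j) : e i * g * e j = 0 := by
  have hblock := (hL.const_mul (e i)).mul_const (e j)
  simp only [he.mul_exp_conj_mul ha] at hblock
  exact eq_zero_of_tendsto_exp_mul_smul_atBot (sub_neg.2 hij) hblock

end BanachAlgebra

section Eigenprojections

variable {𝕜 E : Type*} [RCLike 𝕜] [NormedAddCommGroup E] [InnerProductSpace 𝕜 E]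
  [FiniteDimensional 𝕜 E]

theorem ContinuousLinearMap.mul_starProjection_eigenspace (T : E →L[𝕜] E) (μ : 𝕜) :
    T * (eigenspace (T : E →ₗ[𝕜] E) μ).starProjection =
      μ • (eigenspace (T : E →ₗ[𝕜] E) μ).starProjection := by
  ext w
  exact mem_eigenspace_iff.mp (Submodule.starProjection_apply_mem _ w)

theorem LinearMap.IsSymmetric.completeOrthogonalIdempotents_starProjection_eigenspace
    {ι : Type*} [Fintype ι] {T : E →L[𝕜] E} (hT : (T : E →ₗ[𝕜] E).IsSymmetric) {μ : ι → 𝕜}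
    (hμ : Function.Injective μ)
    (hsum : ∑ i, (eigenspace (T : E →ₗ[𝕜] E) (μ i)).starProjection = 1) :
    CompleteOrthogonalIdempotents fun i => (eigenspace (T : E →ₗ[𝕜] E) (μ i)).starProjection :=
  CompleteOrthogonalIdempotents.iff_ortho_complete.2
    ⟨fun _ _ hij => (hT.orthogonalFamily_eigenspaces.isOrtho
      (hμ.ne hij)).starProjection_comp_starProjection, hsum⟩

end Eigenprojections

/-- Let `β` be a self-adjoint endomorphism of a finite-dimensional complex
inner product space `V` with distinct eigenvalues `λ₁ > ⋯ > λ_k`, eigenspaces `V₁, …, V_k`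
and orthogonal projections `P_i` onto `V_i` (so `∑ P_i = 1`).  For `g ∈ End(V)`, the limit
`lim_{t → −∞} exp(tβ) g exp(−tβ)` exists in `End(V)` if and only if `P_i g P_j = 0`
whenever `λ_i < λ_j`; and in that case the limit equals `∑ i, P_i g P_i`. -/
theorem stmt_12 {V : Type*} [NormedAddCommGroup V] [InnerProductSpace ℂ V]
    [FiniteDimensional ℂ V] (β : V →L[ℂ] V) (hβ : IsSelfAdjoint β)
    (k : ℕ) (lam : Fin k → ℝ) (hanti : StrictAnti lam)
    (P : Fin k → (V →L[ℂ] V))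
    (hP : ∀ i (w : V), P i w =
      (Submodule.orthogonalProjectionOnto
        (Module.End.eigenspace ((β : V →ₗ[ℂ] V) : Module.End ℂ V) (lam i : ℂ)) w : V))
    (hsum : ∑ i, P i = 1) (g : V →L[ℂ] V) :
    ((∃ L : V →L[ℂ] V, Filter.Tendsto
        (fun t : ℝ => NormedSpace.exp (t • β) * g * NormedSpace.exp (-(t • β)))
        Filter.atBot (nhds L)) ↔
      (∀ i j, lam i < lam j → P i * g * P j = 0)) ∧
    ((∀ i j, lam i < lam j → P i * g * P j = 0) →
      Filter.Tendsto
        (fun t : ℝ => NormedSpace.exp (t • β) * g * NormedSpace.exp (-(t • β)))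
        Filter.atBot (nhds (∑ i, P i * g * P i))) := by
  obtain rfl : P = fun i => (eigenspace (β : V →ₗ[ℂ] V) (lam i : ℂ)).starProjection :=
    funext fun i => ContinuousLinearMap.ext fun w => by rw [hP, Submodule.starProjection_apply]
  have he := hβ.isSymmetric.completeOrthogonalIdempotents_starProjection_eigenspace
    (Complex.ofReal_injective.comp hanti.injective) hsum
  have hβP (i : Fin k) :
      β * (eigenspace (β : V →ₗ[ℂ] V) (lam i : ℂ)).starProjection =
        lam i • (eigenspace (β : V →ₗ[ℂ] V) (lam i : ℂ)).starProjection := by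
    rw [β.mul_starProjection_eigenspace, Complex.coe_smul]
  have hlim := he.tendsto_exp_conj_atBot hβP hanti.injective (g := g)
  exact ⟨⟨fun ⟨_, hL⟩ _ _ hij => he.mul_mul_eq_zero_of_tendsto_exp_conj_atBot hβP hL hij,
    fun hg => ⟨_, hlim hg⟩⟩, hlim⟩
end

section
/- Let V be a finite-dimensional complex inner product space, β a self-adjoint endomorphism of V with largest eigenvalue λ₁ and eigenspace W = ker(β − λ₁). If g is an invertible endomorphism of V such that the limit lim_{t → −∞} exp(tβ) g exp(−tβ) exists in End(V), then g(W) = W. -/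
/-!
For `v ∈ W` and an eigenvector `w` of `β` with eigenvalue `μ`, self-adjointness of `exp (t • β)`
gives `⟪w, exp (t • β) g exp (-(t • β)) v⟫ = exp (t (μ - λ₁)) ⟪w, g v⟫`. When `μ < λ₁` the
factor blows up as `t → -∞`, so convergence forces `⟪w, g v⟫ = 0`. Thus `g v` is orthogonal to
every other eigenspace, hence lies in `W` by the spectral theorem, and `g W = W` follows by
comparing dimensions.
-/

open Filter Topology

namespace ContinuousLinearMap

theorem exp_apply_of_apply_eq_smul_s13 {𝕂 E : Type*} [RCLike 𝕂] [NormedAddCommGroup E]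
    [NormedSpace 𝕂 E] [CompleteSpace E] {A : E →L[𝕂] E} {c : 𝕂} {v : E} (hv : A v = c • v) :
    NormedSpace.exp A v = NormedSpace.exp c • v := by
  have hpow (n : ℕ) : (A ^ n) v = c ^ n • v := by
    induction n with
    | zero => simp
    | succ n ih => rw [pow_succ', mul_apply_eq_comp, ih, map_smul, hv, smul_smul, pow_succ]
  have hA := (NormedSpace.exp_series_hasSum_exp' (𝕂 := 𝕂) A).mapL (apply 𝕂 E v)
  have hc := (NormedSpace.exp_series_hasSum_exp' (𝕂 := 𝕂) c).smul_const v
  simp only [apply_apply, smul_apply, hpow, smul_smul] at hA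
  exact hA.unique (by simpa only [smul_eq_mul] using hc)

end ContinuousLinearMap

theorem eq_zero_of_tendsto_exp_mul_smul_atBot_s13 {E : Type*} [NormedAddCommGroup E]
    [NormedSpace ℝ E] {a : ℝ} (ha : a < 0) {c l : E}
    (h : Tendsto (fun t : ℝ => Real.exp (t * a) • c) atBot (𝓝 l)) : c = 0 := by
  by_contra hc
  have hexp : Tendsto (fun t : ℝ => Real.exp (t * a)) atBot atTop :=
    Real.tendsto_exp_atTop.comp (tendsto_id.atBot_mul_const_of_neg ha)
  have hnorm : Tendsto (fun t : ℝ => ‖Real.exp (t * a) • c‖) atBot atTop := by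
    simp only [norm_smul, Real.norm_of_nonneg (Real.exp_pos _).le]
    exact hexp.atTop_mul_const (norm_pos_iff.mpr hc)
  exact not_tendsto_nhds_of_tendsto_atTop hnorm _ h.norm

namespace LinearMap.IsSymmetric

variable {𝕜 E : Type*} [RCLike 𝕜] [NormedAddCommGroup E] [InnerProductSpace 𝕜 E]
  [FiniteDimensional 𝕜 E] {T : E →ₗ[𝕜] E}

theorem mem_eigenspace_of_forall_inner_eq_zero (hT : T.IsSymmetric) {lam : ℝ} {x : E}
    (hx : ∀ μ : ℝ, μ ≠ lam → ∀ w ∈ Module.End.eigenspace T μ, inner 𝕜 w x = 0) :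
    x ∈ Module.End.eigenspace T lam := by
  set b := hT.eigenvectorBasis rfl
  rw [Module.End.mem_eigenspace_iff]
  refine b.repr.injective (PiLp.ext fun i => ?_)
  rw [hT.eigenvectorBasis_apply_self_apply, map_smul, PiLp.smul_apply, smul_eq_mul]
  by_cases hi : hT.eigenvalues rfl i = lam
  · rw [hi]
  · rw [b.repr_apply_apply, hx _ hi _ (hT.hasEigenvector_eigenvectorBasis rfl i).1, mul_zero,
      mul_zero]

end LinearMap.IsSymmetric

section SelfAdjoint

variable {V : Type*} [NormedAddCommGroup V] [InnerProductSpace ℂ V] [CompleteSpace V]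
  {β : V →L[ℂ] V}

theorem exp_smul_apply_of_apply_eq_smul {μ : ℝ} {v : V} (hv : β v = (μ : ℂ) • v) (t : ℝ) :
    NormedSpace.exp (t • β) v = Real.exp (t * μ) • v := by
  have htv : (t • β) v = ((t * μ : ℝ) : ℂ) • v := by
    rw [smul_apply, hv, Complex.ofReal_mul, mul_smul, Complex.coe_smul, Complex.coe_smul]
  rw [ContinuousLinearMap.exp_apply_of_apply_eq_smul_s13 htv, ← Complex.exp_eq_exp_ℂ,
    ← Complex.ofReal_exp, Complex.coe_smul]

theorem IsSelfAdjoint.inner_exp_smul_apply (hβ : IsSelfAdjoint β) {μ : ℝ} {w : V}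
    (hw : β w = (μ : ℂ) • w) (t : ℝ) (x : V) :
    inner ℂ w (NormedSpace.exp (t • β) x) = Real.exp (t * μ) • inner ℂ w x := by
  have hsymm : inner ℂ (NormedSpace.exp (t • β) w) x = inner ℂ w (NormedSpace.exp (t • β) x) :=
    (IsSelfAdjoint.smul (star_trivial t) hβ).exp.isSymmetric w x
  rw [← hsymm, exp_smul_apply_of_apply_eq_smul hw, inner_smul_left_eq_smul]

theorem IsSelfAdjoint.inner_exp_conj_apply (hβ : IsSelfAdjoint β) {lam μ : ℝ} {v w : V}
    (hv : β v = (lam : ℂ) • v) (hw : β w = (μ : ℂ) • w) (g : V →L[ℂ] V) (t : ℝ) :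
    inner ℂ w ((NormedSpace.exp (t • β) * g * NormedSpace.exp (-(t • β))) v) =
      Real.exp (t * (μ - lam)) • inner ℂ w (g v) := by
  rw [mul_apply_eq_comp, mul_apply_eq_comp, ← neg_smul, exp_smul_apply_of_apply_eq_smul hv,
    ContinuousLinearMap.map_smul_of_tower, hβ.inner_exp_smul_apply hw, inner_smul_right_eq_smul,
    smul_smul, ← Real.exp_add]
  congr 2; ring

end SelfAdjoint

theorem IsSelfAdjoint.map_eigenspace_le_of_tendsto_conj {V : Type*} [NormedAddCommGroup V]
    [InnerProductSpace ℂ V] [FiniteDimensional ℂ V] {β : V →L[ℂ] V} (hβ : IsSelfAdjoint β)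
    {lam : ℝ}
    (hlam : lam ∈ upperBounds {μ : ℝ | Module.End.HasEigenvalue (β : V →ₗ[ℂ] V) (μ : ℂ)})
    {g L : V →L[ℂ] V}
    (hL : Tendsto (fun t : ℝ => NormedSpace.exp (t • β) * g * NormedSpace.exp (-(t • β)))
      atBot (𝓝 L)) :
    (Module.End.eigenspace (β : V →ₗ[ℂ] V) lam).map (g : V →ₗ[ℂ] V) ≤
      Module.End.eigenspace (β : V →ₗ[ℂ] V) lam := by
  rintro _ ⟨v, hv, rfl⟩
  refine hβ.isSymmetric.mem_eigenspace_of_forall_inner_eq_zero fun μ hμ w hw => ?_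
  obtain rfl | hw0 := eq_or_ne w 0
  · exact inner_zero_left _
  have hlt : μ < lam := (hlam (Module.End.hasEigenvalue_of_hasEigenvector ⟨hw, hw0⟩)).lt_of_ne hμ
  have hconj := ((innerSL ℂ w).continuous.tendsto _).comp
    (((ContinuousLinearMap.apply ℂ V v).continuous.tendsto L).comp hL)
  refine eq_zero_of_tendsto_exp_mul_smul_atBot_s13 (sub_neg.mpr hlt) (hconj.congr fun t => ?_)
  exact hβ.inner_exp_conj_apply (Module.End.mem_eigenspace_iff.mp hv)
    (Module.End.mem_eigenspace_iff.mp hw) g t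

/-- Let `β` be a self-adjoint endomorphism of a finite-dimensional complex
inner product space `V` with largest eigenvalue `λ₁` and eigenspace `W = ker (β - λ₁)`.
If `g` is an invertible endomorphism of `V` such that `lim_{t → −∞} exp(tβ) g exp(−tβ)`
exists in `End(V)`, then `g(W) = W`. -/
theorem stmt_13 {V : Type*} [NormedAddCommGroup V] [InnerProductSpace ℂ V]
    [FiniteDimensional ℂ V] (β : V →L[ℂ] V) (hβ : IsSelfAdjoint β) (lam₁ : ℝ)
    (hlam : IsGreatest {μ : ℝ |
      Module.End.HasEigenvalue ((β : V →ₗ[ℂ] V) : Module.End ℂ V) (μ : ℂ)} lam₁)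
    (g : (V →L[ℂ] V)ˣ)
    (hg : ∃ L : V →L[ℂ] V, Filter.Tendsto
      (fun t : ℝ =>
        NormedSpace.exp (t • β) * (g : V →L[ℂ] V) * NormedSpace.exp (-(t • β)))
      Filter.atBot (nhds L)) :
    Submodule.map (((g : V →L[ℂ] V) : V →ₗ[ℂ] V))
        (Module.End.eigenspace ((β : V →ₗ[ℂ] V) : Module.End ℂ V) (lam₁ : ℂ)) =
      Module.End.eigenspace ((β : V →ₗ[ℂ] V) : Module.End ℂ V) (lam₁ : ℂ) := by
  obtain ⟨L, hL⟩ := hg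
  exact Submodule.eq_of_le_of_finrank_eq (hβ.map_eigenspace_le_of_tendsto_conj hlam.2 hL)
    (LinearEquiv.finrank_map_eq (ContinuousLinearEquiv.ofUnit g).toLinearEquiv _)
end

section
/- Let V be a finite-dimensional complex inner product space and β a self-adjoint endomorphism of V. Then the set G^{β+} := {g ∈ GL(V) : lim_{t → −∞} exp(tβ) g exp(−tβ) exists in End(V)} is a subgroup of GL(V): it contains the identity, is closed under composition, and is closed under taking inverses. -/
/-!
Conjugation by a family of units is an automorphism for each `t`, so limits of conjugates are
multiplicative, and the conjugate of `g⁻¹` is the ring inverse of the conjugate of `g`; the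
latter passes to the limit as soon as the limit of the conjugates of `g` is itself invertible.
In finite dimension it is: conjugation preserves the determinant, so by continuity of `det` the
limit has determinant `det g ≠ 0`.
-/

open Filter Topology NormedSpace

section UnitsConj

variable {A α : Type*} {l : Filter α}

theorem Filter.Tendsto.units_conj_mul [Monoid A] [TopologicalSpace A] [ContinuousMul A]
    {u : α → Aˣ} {g h L L' : A}
    (hg : Tendsto (fun t => (u t : A) * g * ↑(u t)⁻¹) l (𝓝 L))
    (hh : Tendsto (fun t => (u t : A) * h * ↑(u t)⁻¹) l (𝓝 L')) :
    Tendsto (fun t => (u t : A) * (g * h) * ↑(u t)⁻¹) l (𝓝 (L * L')) := by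
  simpa only [mul_assoc, Units.inv_mul_cancel_left] using hg.mul hh

theorem Filter.Tendsto.units_conj_inv [NormedRing A] [CompleteSpace A] {u : α → Aˣ} {g L : Aˣ}
    (hg : Tendsto (fun t => (u t : A) * g * ↑(u t)⁻¹) l (𝓝 L)) :
    Tendsto (fun t => (u t : A) * ↑g⁻¹ * ↑(u t)⁻¹) l (𝓝 ↑L⁻¹) := by
  have conj_inv (t : α) :
      (u t : A) * ↑g⁻¹ * ↑(u t)⁻¹ = Ring.inverse ((u t : A) * g * ↑(u t)⁻¹) := by
    simp only [← Units.val_mul, Ring.inverse_unit, mul_inv_rev, inv_inv, mul_assoc]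
  simp_rw [conj_inv, ← Ring.inverse_unit L]
  exact (NormedRing.inverse_continuousAt L).tendsto.comp hg

end UnitsConj

namespace ContinuousLinearMap

variable {𝕜 E α : Type*} [NontriviallyNormedField 𝕜] [NormedAddCommGroup E]
  [NormedSpace 𝕜 E]

theorem det_units_conj (u : (E →L[𝕜] E)ˣ) (g : E →L[𝕜] E) :
    ((u : E →L[𝕜] E) * g * ↑u⁻¹).det = g.det := by
  simp only [det, toLinearMap_mul, map_mul]
  rw [mul_right_comm, ← map_mul, ← toLinearMap_mul, Units.mul_inv, toLinearMap_one, map_one,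
    one_mul]

variable [CompleteSpace 𝕜] [FiniteDimensional 𝕜 E] {l : Filter α} [l.NeBot]

theorem isUnit_of_tendsto_units_conj {u : α → (E →L[𝕜] E)ˣ} {g : (E →L[𝕜] E)ˣ}
    {L : E →L[𝕜] E}
    (hL : Tendsto (fun t => (u t : E →L[𝕜] E) * g * ↑(u t)⁻¹) l (𝓝 L)) : IsUnit L := by
  have : CompleteSpace E := FiniteDimensional.complete 𝕜 E
  have det_eq : L.det = (g : E →L[𝕜] E).det := by
    refine tendsto_nhds_unique ((continuous_det.tendsto L).comp hL) ?_
    simp_rw [Function.comp_def, det_units_conj]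
    exact tendsto_const_nhds
  rw [isUnit_iff_isUnit_toLinearMap, LinearMap.isUnit_iff_isUnit_det]
  change IsUnit L.det
  rw [det_eq]
  exact (LinearMap.isUnit_iff_isUnit_det _).mp
    (isUnit_iff_isUnit_toLinearMap.mp g.isUnit)

variable (l) in
def conjLimitSubgroup (u : α → (E →L[𝕜] E)ˣ) : Subgroup (E →L[𝕜] E)ˣ where
  carrier := {g | ∃ L, Tendsto (fun t => (u t : E →L[𝕜] E) * g * ↑(u t)⁻¹) l (𝓝 L)}
  one_mem' :=
    ⟨1, by simpa only [Units.val_one, mul_one, Units.mul_inv] using tendsto_const_nhds⟩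
  mul_mem' := fun ⟨L, hL⟩ ⟨L', hL'⟩ =>
    ⟨L * L', by simpa only [Units.val_mul] using hL.units_conj_mul hL'⟩
  inv_mem' := fun {g} ⟨L, hL⟩ => by
    have : CompleteSpace E := FiniteDimensional.complete 𝕜 E
    lift L to (E →L[𝕜] E)ˣ using isUnit_of_tendsto_units_conj hL
    exact ⟨_, hL.units_conj_inv⟩

end ContinuousLinearMap

namespace NormedSpace

variable (𝕂 : Type*) {𝔸 : Type*} [RCLike 𝕂] [NormedRing 𝔸] [NormedAlgebra 𝕂 𝔸]
  [CompleteSpace 𝔸]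

noncomputable def expUnit (x : 𝔸) : 𝔸ˣ :=
  @unitOfInvertible _ _ (exp x) <| invertibleExpOfMemBall (𝕂 := 𝕂) <|
    (expSeries_radius_eq_top 𝕂 𝔸).symm ▸ edist_lt_top _ _

end NormedSpace

theorem stmt_15_general {V : Type*} [NormedAddCommGroup V] [InnerProductSpace ℂ V]
    [FiniteDimensional ℂ V] (β : V →L[ℂ] V) :
    (1 : (V →L[ℂ] V)ˣ) ∈ {g : (V →L[ℂ] V)ˣ | ∃ L : V →L[ℂ] V, Filter.Tendsto
        (fun t : ℝ =>
          NormedSpace.exp (t • β) * (g : V →L[ℂ] V) * NormedSpace.exp (-(t • β)))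
        Filter.atBot (nhds L)} ∧
    (∀ g ∈ {g : (V →L[ℂ] V)ˣ | ∃ L : V →L[ℂ] V, Filter.Tendsto
        (fun t : ℝ =>
          NormedSpace.exp (t • β) * (g : V →L[ℂ] V) * NormedSpace.exp (-(t • β)))
        Filter.atBot (nhds L)},
      ∀ h ∈ {g : (V →L[ℂ] V)ˣ | ∃ L : V →L[ℂ] V, Filter.Tendsto
        (fun t : ℝ =>
          NormedSpace.exp (t • β) * (g : V →L[ℂ] V) * NormedSpace.exp (-(t • β)))
        Filter.atBot (nhds L)},
      g * h ∈ {g : (V →L[ℂ] V)ˣ | ∃ L : V →L[ℂ] V, Filter.Tendsto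
        (fun t : ℝ =>
          NormedSpace.exp (t • β) * (g : V →L[ℂ] V) * NormedSpace.exp (-(t • β)))
        Filter.atBot (nhds L)}) ∧
    (∀ g ∈ {g : (V →L[ℂ] V)ˣ | ∃ L : V →L[ℂ] V, Filter.Tendsto
        (fun t : ℝ =>
          NormedSpace.exp (t • β) * (g : V →L[ℂ] V) * NormedSpace.exp (-(t • β)))
        Filter.atBot (nhds L)},
      g⁻¹ ∈ {g : (V →L[ℂ] V)ˣ | ∃ L : V →L[ℂ] V, Filter.Tendsto
        (fun t : ℝ =>
          NormedSpace.exp (t • β) * (g : V →L[ℂ] V) * NormedSpace.exp (-(t • β)))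
        Filter.atBot (nhds L)}) := by
  -- `↑(expUnit ℂ x)⁻¹` is `exp (-x)` by definition, so the carrier of `S` is the set above.
  let S := ContinuousLinearMap.conjLimitSubgroup atBot fun t : ℝ => expUnit ℂ (t • β)
  exact ⟨S.one_mem, fun _ hg _ hh => S.mul_mem hg hh, fun _ hg => S.inv_mem hg⟩

/-- Let `β` be a self-adjoint endomorphism of a finite-dimensional complex
inner product space `V`.  Then
`G^{β+} = {g ∈ GL(V) : lim_{t → −∞} exp(tβ) g exp(−tβ) exists in End(V)}` is a subgroup of
`GL(V)`: it contains the identity, and is closed under composition and under inverses. -/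
theorem stmt_15 {V : Type*} [NormedAddCommGroup V] [InnerProductSpace ℂ V]
    [FiniteDimensional ℂ V] (β : V →L[ℂ] V) (hβ : IsSelfAdjoint β) :
    (1 : (V →L[ℂ] V)ˣ) ∈ {g : (V →L[ℂ] V)ˣ | ∃ L : V →L[ℂ] V, Filter.Tendsto
        (fun t : ℝ =>
          NormedSpace.exp (t • β) * (g : V →L[ℂ] V) * NormedSpace.exp (-(t • β)))
        Filter.atBot (nhds L)} ∧
    (∀ g ∈ {g : (V →L[ℂ] V)ˣ | ∃ L : V →L[ℂ] V, Filter.Tendsto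
        (fun t : ℝ =>
          NormedSpace.exp (t • β) * (g : V →L[ℂ] V) * NormedSpace.exp (-(t • β)))
        Filter.atBot (nhds L)},
      ∀ h ∈ {g : (V →L[ℂ] V)ˣ | ∃ L : V →L[ℂ] V, Filter.Tendsto
        (fun t : ℝ =>
          NormedSpace.exp (t • β) * (g : V →L[ℂ] V) * NormedSpace.exp (-(t • β)))
        Filter.atBot (nhds L)},
      g * h ∈ {g : (V →L[ℂ] V)ˣ | ∃ L : V →L[ℂ] V, Filter.Tendsto
        (fun t : ℝ =>
          NormedSpace.exp (t • β) * (g : V →L[ℂ] V) * NormedSpace.exp (-(t • β)))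
        Filter.atBot (nhds L)}) ∧
    (∀ g ∈ {g : (V →L[ℂ] V)ˣ | ∃ L : V →L[ℂ] V, Filter.Tendsto
        (fun t : ℝ =>
          NormedSpace.exp (t • β) * (g : V →L[ℂ] V) * NormedSpace.exp (-(t • β)))
        Filter.atBot (nhds L)},
      g⁻¹ ∈ {g : (V →L[ℂ] V)ˣ | ∃ L : V →L[ℂ] V, Filter.Tendsto
        (fun t : ℝ =>
          NormedSpace.exp (t • β) * (g : V →L[ℂ] V) * NormedSpace.exp (-(t • β)))
        Filter.atBot (nhds L)}) :=
  stmt_15_general β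
end

section
/- Let V be a finite-dimensional complex vector space and g an invertible linear endomorphism of V. Let S ⊆ ℙ(V) be a connected subset such that the nonzero vectors representing points of S span V, and suppose that g fixes every point of S (i.e., for every [v] ∈ S one has [gv] = [v]). Then g is a scalar multiple of the identity; in particular g fixes every point of ℙ(V). -/
/-!
For each `c : ℂ`, the points `[v]` with `g v = c • v` form the projectivization of the
eigenspace of `c`, a closed subset of `ℙ(V)`. These sets are pairwise disjoint and only
finitely many are nonempty, and by hypothesis they cover `S`; a connected set covered by finitely
many pairwise disjoint closed sets lies in one of them. Hence every representative of a point of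
`S` lies in a single eigenspace, which therefore contains their span `V`.
-/

open scoped LinearAlgebra.Projectivization

noncomputable instance stmt16.instTop (V : Type*) [NormedAddCommGroup V]
    [NormedSpace ℂ V] : TopologicalSpace (ℙ ℂ V) :=
  instTopologicalSpaceQuotient

section

open Set Function Module.End

theorem IsPreconnected.subset_of_finite_cover_of_pairwise_disjoint_closed {X ι : Type*}
    [TopologicalSpace X] {S : Set X} (hS : IsPreconnected S) {T : ι → Set X}
    (hT : ∀ i, IsClosed (T i)) (hdisj : Pairwise (Disjoint on T)) {I : Set ι} (hI : I.Finite)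
    (hcover : S ⊆ ⋃ i ∈ I, T i) {i₀ : ι} (hi₀ : (S ∩ T i₀).Nonempty) : S ⊆ T i₀ := by
  set F := ⋃ i ∈ I \ {i₀}, T i
  have hF : IsClosed F := hI.sdiff.isClosed_biUnion fun i _ => hT i
  have hdisjF : Disjoint (T i₀) F :=
    disjoint_iUnion₂_right.2 fun i hi => hdisj (Ne.symm hi.2)
  have hsplit : S ⊆ T i₀ ∪ F := by
    intro x hx
    obtain ⟨i, hi, hxi⟩ := mem_iUnion₂.1 (hcover hx)
    by_cases h : i = i₀
    · exact Or.inl (h ▸ hxi)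
    · exact Or.inr (mem_iUnion₂.2 ⟨i, ⟨hi, h⟩, hxi⟩)
  have hSF : S ∩ (T i₀ ∩ F) = ∅ := by
    rw [hdisjF.inter_eq, inter_empty]
  rcases isPreconnected_iff_subset_of_disjoint_closed.1 hS _ _ (hT i₀) hF hsplit hSF with h | h
  · exact h
  · obtain ⟨x, hxS, hx₀⟩ := hi₀
    exact absurd (h hxS) (hdisjF.notMem_of_mem_left hx₀)

theorem Module.End.pairwise_disjoint_projectivization_eigenspace {K W : Type*} [Field K]
    [AddCommGroup W] [Module K W] (f : End K W) :
    Pairwise (Disjoint on fun μ => ((f.eigenspace μ).projectivization : Set (ℙ K W))) := by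
  intro μ₁ μ₂ hμ
  refine disjoint_left.2 (Projectivization.ind fun v hv h₁ h₂ => hv ?_)
  exact Submodule.disjoint_def.1 (f.disjoint_genEigenspace hμ 1 1) v h₁ h₂

theorem Module.End.hasEigenvalue_of_mem_projectivization {K W : Type*} [Field K]
    [AddCommGroup W] [Module K W] {f : End K W} {μ : K} {x : ℙ K W}
    (hx : x ∈ (f.eigenspace μ).projectivization) : f.HasEigenvalue μ := by
  induction x using Projectivization.ind with
  | h v hv => exact hasEigenvalue_of_hasEigenvector ⟨hx, hv⟩

variable {V : Type*} [NormedAddCommGroup V] [NormedSpace ℂ V]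

theorem Submodule.isClosed_projectivization {W : Submodule ℂ V} (hW : IsClosed (W : Set V)) :
    IsClosed (W.projectivization : Set (ℙ ℂ V)) :=
  isQuotientMap_quot_mk.isClosed_preimage.1 (hW.preimage continuous_subtype_val)

theorem Module.End.exists_subset_projectivization_eigenspace_of_isPreconnected
    [FiniteDimensional ℂ V] (g : End ℂ V)
    {S : Set (ℙ ℂ V)} (hS : IsPreconnected S)
    (hfix : ∀ x ∈ S, ∃ c, x ∈ (g.eigenspace c).projectivization) :
    ∃ c, S ⊆ (g.eigenspace c).projectivization := by
  rcases S.eq_empty_or_nonempty with rfl | ⟨x₀, hx₀⟩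
  · exact ⟨0, empty_subset _⟩
  obtain ⟨c₀, hc₀⟩ := hfix x₀ hx₀
  refine ⟨c₀, hS.subset_of_finite_cover_of_pairwise_disjoint_closed
    (fun c => Submodule.isClosed_projectivization (Submodule.closed_of_finiteDimensional _))
    ?_ g.finite_hasEigenvalue ?_ ⟨x₀, hx₀, hc₀⟩⟩
  · exact g.pairwise_disjoint_projectivization_eigenspace
  · intro x hx
    obtain ⟨c, hc⟩ := hfix x hx
    exact mem_iUnion₂.2 ⟨c, hasEigenvalue_of_mem_projectivization hc, hc⟩

end

theorem stmt_16_general {V : Type*} [NormedAddCommGroup V] [NormedSpace ℂ V]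
    [FiniteDimensional ℂ V] (g : V →ₗ[ℂ] V)
    (S : Set (ℙ ℂ V)) (hconn : IsPreconnected S)
    (hspan : Submodule.span ℂ {v : V | ∃ hv : v ≠ 0, Projectivization.mk ℂ v hv ∈ S} = ⊤)
    (hfix : ∀ (v : V) (hv : v ≠ 0), Projectivization.mk ℂ v hv ∈ S →
      ∃ c : ℂ, c ≠ 0 ∧ g v = c • v) :
    ∃ c : ℂ, ∀ v : V, g v = c • v := by
  have hS_eig : ∀ x ∈ S, ∃ c, x ∈ (Module.End.eigenspace g c).projectivization := by
    refine Projectivization.ind fun v hv hvS => ?_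
    obtain ⟨c, -, hc⟩ := hfix v hv hvS
    exact ⟨c, Module.End.mem_eigenspace_iff.2 hc⟩
  obtain ⟨c, hc⟩ := Module.End.exists_subset_projectivization_eigenspace_of_isPreconnected g
    hconn hS_eig
  have htop : Module.End.eigenspace g c = ⊤ := by
    rw [eq_top_iff, ← hspan, Submodule.span_le]
    rintro v ⟨_, hvS⟩
    exact hc hvS
  exact ⟨c, fun v => Module.End.mem_eigenspace_iff.1 (htop ▸ Submodule.mem_top)⟩

/-- Let `V` be a finite-dimensional complex vector space and `g` an
invertible linear endomorphism of `V`.  Let `S ⊆ ℙ(V)` be a connected subset whose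
representatives span `V`, and suppose `g` fixes every point of `S` (i.e. `[gv] = [v]`, that
is, `gv` is a nonzero scalar multiple of `v`, for every `[v] ∈ S`).  Then `g` is a scalar
multiple of the identity; in particular `g` fixes every point of `ℙ(V)`. -/
theorem stmt_16 {V : Type*} [NormedAddCommGroup V] [NormedSpace ℂ V]
    [FiniteDimensional ℂ V] (g : V →ₗ[ℂ] V) (hg : Function.Bijective g)
    (S : Set (ℙ ℂ V)) (hconn : IsPreconnected S)
    (hspan : Submodule.span ℂ {v : V | ∃ hv : v ≠ 0, Projectivization.mk ℂ v hv ∈ S} = ⊤)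
    (hfix : ∀ (v : V) (hv : v ≠ 0), Projectivization.mk ℂ v hv ∈ S →
      ∃ c : ℂ, c ≠ 0 ∧ g v = c • v) :
    ∃ c : ℂ, ∀ v : V, g v = c • v :=
  stmt_16_general g S hconn hspan hfix
end
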